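/- Let x,y ∈ ℝ^d with x ≠ y, let f be a 1-field with dom(f) = {x,y}, f(x) = P_x, f(y) = P_y, M := Γ¹(f;{x,y}) > 0, and let s ∈ {−1,1} and c := (x+y)/2 + s(D_xf − D_yf)/(2M) satisfy P_x(c) − (sM/2)‖x−c‖² = P_y(c) + (sM/2)‖y−c‖² and D_xf + sM(x−c) = D_yf − sM(y−c); assume c ≠ x and c ≠ y. Suppose A(f;x,y) ≠ 0. Define f̃_c := P_x(c) − (sM/2)‖x−c‖², D_cf̃ := D_xf + sM(x−c), P̃_c(z) := f̃_c + D_cf̃·(z−c), p(z) := (x−c)·(z−c) and q(z) := (y−c)·(z−c), and let F : ℝ^d → ℝ be given by: F(z) = P̃_c(z) − (sM/2)·[(z−c)·(x−c)]²/‖x−c‖² if p(z) ≥ 0 and q(z) ≤ 0; F(z) = P̃_c(z) + (sM/2)·[(z−c)·(y−c)]²/‖y−c‖² if p(z) ≤ 0 and q(z) ≥ 0; F(z) = P̃_c(z) if p(z) ≤ 0 and q(z) ≤ 0; F(z) = P̃_c(z) − (sM/2)·[(z−c)·(x−c)]²/‖x−c‖² + (sM/2)·[(z−c)·(y−c)]²/‖y−c‖²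 if p(z) ≥ 0 and q(z) ≥ 0. Then F is a well-defined C^{1,1} function, and the 1-field U on ℝ^d of its first-order Taylor polynomials, U(a) := J_aF, is a minimal extension of f: U(x) = f(x), U(y) = f(y), and Γ¹(U;ℝ^d) = M. -/

import Mathlib

open scoped ENNReal RealInnerProductSpace
open Metric Set InnerProductSpace

/-- A 1-field assigns to each point `x` the pair `(f_x, D_xf)` representing the affine
polynomial `a ↦ f_x + ⟪D_xf, a - x⟫`; `eval1 f x a` is the evaluation `f(x)(a)`. -/
noncomputable def eval1 {d : ℕ} (f : EuclideanSpace ℝ (Fin d) → ℝ × EuclideanSpace ℝ (Fin d))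
    (x a : EuclideanSpace ℝ (Fin d)) : ℝ :=
  (f x).1 + ⟪(f x).2, a - x⟫

/-- `Γ¹(f;x,y) = 2 sup_a |f(x)(a) - f(y)(a)| / (‖x-a‖² + ‖y-a‖²)`. -/
noncomputable def gamma1 {d : ℕ} (f : EuclideanSpace ℝ (Fin d) → ℝ × EuclideanSpace ℝ (Fin d))
    (x y : EuclideanSpace ℝ (Fin d)) : ℝ :=
  2 * ⨆ a : EuclideanSpace ℝ (Fin d),
    |eval1 f x a - eval1 f y a| / (‖x - a‖ ^ 2 + ‖y - a‖ ^ 2)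

/-- `Γ¹(f;D) = sup {Γ¹(f;x,y) : x,y ∈ D, x ≠ y}`, valued in `[0,∞]`. -/
noncomputable def gamma1On {d : ℕ} (f : EuclideanSpace ℝ (Fin d) → ℝ × EuclideanSpace ℝ (Fin d))
    (D : Set (EuclideanSpace ℝ (Fin d))) : ℝ≥0∞ :=
  ⨆ x ∈ D, ⨆ y ∈ D, ⨆ (_ : x ≠ y), ENNReal.ofReal (gamma1 f x y)

/-- `A(f;x,y) = (2(f_x - f_y) + ⟪D_xf + D_yf, y - x⟫) / ‖x-y‖²`. -/
noncomputable def Afun {d : ℕ} (f : EuclideanSpace ℝ (Fin d) → ℝ × EuclideanSpace ℝ (Fin d))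
    (x y : EuclideanSpace ℝ (Fin d)) : ℝ :=
  (2 * ((f x).1 - (f y).1) + ⟪(f x).2 + (f y).2, y - x⟫) / ‖x - y‖ ^ 2

section Aux

lemma hasDerivAt_maxSq (t : ℝ) : HasDerivAt (fun t : ℝ => max t 0 ^ 2) (2 * max t 0) t := by
  rcases lt_trichotomy t 0 with h | h | h
  · have : (fun t : ℝ => max t 0 ^ 2) =ᶠ[nhds t] fun _ => (0:ℝ) := by
      filter_upwards [eventually_lt_nhds h] with a ha
      simp [max_eq_right ha.le]
    rw [max_eq_right h.le]
    simpa using (hasDerivAt_const t (0:ℝ)).congr_of_eventuallyEq this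
  · subst h
    rw [hasDerivAt_iff_isLittleO]
    simp only [max_self, ne_eq, OfNat.ofNat_ne_zero, not_false_eq_true, zero_pow, mul_zero,
      smul_zero, sub_zero]
    rw [Asymptotics.isLittleO_iff]
    intro ε hε
    filter_upwards [Metric.ball_mem_nhds 0 hε] with a ha
    simp only [Metric.mem_ball, Real.dist_eq, sub_zero] at ha
    have h1 : |max a 0 ^ 2| ≤ |a| * |a| := by
      rcases le_total a 0 with h' | h' <;> simp [max_eq_right, max_eq_left, h'] <;> nlinarith
    calc ‖max a 0 ^ 2‖ ≤ |a| * |a| := h1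
      _ ≤ ε * ‖a‖ := by
          rw [Real.norm_eq_abs]
          exact mul_le_mul_of_nonneg_right ha.le (abs_nonneg a)
  · have : (fun t : ℝ => max t 0 ^ 2) =ᶠ[nhds t] fun t => t ^ 2 := by
      filter_upwards [eventually_gt_nhds h] with a ha
      simp [max_eq_left ha.le]
    rw [max_eq_left h.le]
    have := ((hasDerivAt_pow 2 t)).congr_of_eventuallyEq this
    simpa [mul_comm] using this

variable {E : Type*} [NormedAddCommGroup E] [InnerProductSpace ℝ E] [CompleteSpace E]

lemma hasGradientAt_inner_shift (u c z : E) :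
    HasGradientAt (fun z : E => ⟪u, z - c⟫) u z := by
  rw [hasGradientAt_iff_hasFDerivAt]
  have h : HasFDerivAt (fun z : E => ⟪u, z - c⟫) (innerSL ℝ u) z := by
    have h1 : HasFDerivAt (fun z : E => z - c) (ContinuousLinearMap.id ℝ E) z :=
      (hasFDerivAt_id z).sub_const c
    have h2 := ((innerSL ℝ u).hasFDerivAt (x := z - c)).comp z h1
    rw [ContinuousLinearMap.comp_id] at h2
    exact h2
  exact h

lemma hasGradientAt_maxSq_inner (u c z : E) :
    HasGradientAt (fun z : E => max ⟪u, z - c⟫ 0 ^ 2)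
      ((2 * max ⟪u, z - c⟫ 0) • u) z := by
  rw [hasGradientAt_iff_hasFDerivAt]
  have h1 : HasFDerivAt (fun z : E => ⟪u, z - c⟫) (toDual ℝ E u) z :=
    (hasGradientAt_inner_shift u c z).hasFDerivAt
  have h2 := (hasDerivAt_maxSq (⟪u, z - c⟫)).comp_hasFDerivAt z h1
  refine h2.congr_fderiv ?_
  ext w
  simp [InnerProductSpace.toDual_apply_apply, inner_smul_left]

lemma maxSq_remainder (t₀ t : ℝ) :
    0 ≤ max (t₀ + t) 0 ^ 2 - max t₀ 0 ^ 2 - 2 * max t₀ 0 * t ∧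
    max (t₀ + t) 0 ^ 2 - max t₀ 0 ^ 2 - 2 * max t₀ 0 * t ≤ t ^ 2 := by
  rcases le_total t₀ 0 with h | h <;> rcases le_total (t₀ + t) 0 with h' | h' <;>
    simp only [max_eq_right h, max_eq_left h, max_eq_right h', max_eq_left h'] <;>
    constructor <;> nlinarith [sq_nonneg t, sq_nonneg (t₀ + t), sq_nonneg t₀]

end Aux

set_option maxHeartbeats 1600000 in
/-- The explicit piecewise minimal extension of a biponctual 1-field in the case
`A(f;x,y) ≠ 0`: the piecewise formula defines a `C^{1,1}` function whose 1-field of first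
order Taylor polynomials is a minimal extension of `f`. -/
theorem minimal_extension_of_A_ne_zero {d : ℕ}
    (x y : EuclideanSpace ℝ (Fin d)) (hxy : x ≠ y)
    (f : EuclideanSpace ℝ (Fin d) → ℝ × EuclideanSpace ℝ (Fin d))
    (M s : ℝ) (hM : M = gamma1 f x y) (hMpos : 0 < M) (hs : s = 1 ∨ s = -1)
    (c : EuclideanSpace ℝ (Fin d))
    (hc : c = midpoint ℝ x y + (s / (2 * M)) • ((f x).2 - (f y).2))
    (hcx : c ≠ x) (hcy : c ≠ y)
    (hceq1 : eval1 f x c - s * M / 2 * ‖x - c‖ ^ 2 = eval1 f y c + s * M / 2 * ‖y - c‖ ^ 2)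
    (hceq2 : (f x).2 + (s * M) • (x - c) = (f y).2 - (s * M) • (y - c))
    (hA : Afun f x y ≠ 0)
    (F : EuclideanSpace ℝ (Fin d) → ℝ)
    (hF₁ : ∀ z : EuclideanSpace ℝ (Fin d),
      0 ≤ ⟪x - c, z - c⟫ → ⟪y - c, z - c⟫ ≤ 0 →
      F z = (eval1 f x c - s * M / 2 * ‖x - c‖ ^ 2)
        + ⟪(f x).2 + (s * M) • (x - c), z - c⟫
        - s * M / 2 * ⟪z - c, x - c⟫ ^ 2 / ‖x - c‖ ^ 2)
    (hF₂ : ∀ z : EuclideanSpace ℝ (Fin d),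
      ⟪x - c, z - c⟫ ≤ 0 → 0 ≤ ⟪y - c, z - c⟫ →
      F z = (eval1 f x c - s * M / 2 * ‖x - c‖ ^ 2)
        + ⟪(f x).2 + (s * M) • (x - c), z - c⟫
        + s * M / 2 * ⟪z - c, y - c⟫ ^ 2 / ‖y - c‖ ^ 2)
    (hF₃ : ∀ z : EuclideanSpace ℝ (Fin d),
      ⟪x - c, z - c⟫ ≤ 0 → ⟪y - c, z - c⟫ ≤ 0 →
      F z = (eval1 f x c - s * M / 2 * ‖x - c‖ ^ 2)
        + ⟪(f x).2 + (s * M) • (x - c), z - c⟫)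
    (hF₄ : ∀ z : EuclideanSpace ℝ (Fin d),
      0 ≤ ⟪x - c, z - c⟫ → 0 ≤ ⟪y - c, z - c⟫ →
      F z = (eval1 f x c - s * M / 2 * ‖x - c‖ ^ 2)
        + ⟪(f x).2 + (s * M) • (x - c), z - c⟫
        - s * M / 2 * ⟪z - c, x - c⟫ ^ 2 / ‖x - c‖ ^ 2
        + s * M / 2 * ⟪z - c, y - c⟫ ^ 2 / ‖y - c‖ ^ 2)
    (U : EuclideanSpace ℝ (Fin d) → ℝ × EuclideanSpace ℝ (Fin d))
    (hU : ∀ a : EuclideanSpace ℝ (Fin d), U a = (F a, gradient F a)) :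
    Differentiable ℝ F ∧
    (∃ K : NNReal, LipschitzWith K (fun a : EuclideanSpace ℝ (Fin d) => gradient F a)) ∧
    U x = f x ∧ U y = f y ∧ gamma1On U Set.univ = ENNReal.ofReal M := by
  classical
  set u := x - c with hu_def
  set v := y - c with hv_def
  have hu0 : u ≠ 0 := sub_ne_zero.mpr (Ne.symm hcx)
  have hv0 : v ≠ 0 := sub_ne_zero.mpr (Ne.symm hcy)
  have hunp : (0:ℝ) < ‖u‖ := norm_pos_iff.mpr hu0
  have hun : (0:ℝ) < ‖u‖ ^ 2 := by positivity
  have hvnp : (0:ℝ) < ‖v‖ := norm_pos_iff.mpr hv0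
  have hvn : (0:ℝ) < ‖v‖ ^ 2 := by positivity
  have hs2 : s ^ 2 = 1 := by rcases hs with h | h <;> simp [h]
  have hs0 : s ≠ 0 := by rcases hs with h | h <;> simp [h]
  set b₀ : ℝ := eval1 f x c - s * M / 2 * ‖x - c‖ ^ 2 with hb₀
  set g₀ := (f x).2 + (s * M) • (x - c) with hg₀
  set cu : ℝ := s * M / 2 / ‖u‖ ^ 2 with hcu
  set cv : ℝ := s * M / 2 / ‖v‖ ^ 2 with hcv
  set G : EuclideanSpace ℝ (Fin d) → ℝ := fun z => b₀ + ⟪g₀, z - c⟫ - cu * max ⟪u, z - c⟫ 0 ^ 2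
      + cv * max ⟪v, z - c⟫ 0 ^ 2 with hG
  -- Step 1 : F = G
  have hFG : ∀ z, F z = G z := by
    intro z
    rcases le_total ⟪u, z - c⟫ 0 with hp | hp <;> rcases le_total ⟪v, z - c⟫ 0 with hq | hq
    · rw [hF₃ z hp hq]
      simp only [hG, max_eq_right hp, max_eq_right hq]
      ring
    · rw [hF₂ z hp hq, real_inner_comm v (z - c)]
      simp only [hG, max_eq_right hp, max_eq_left hq, hcv]
      field_simp
      ring
    · rw [hF₁ z hp hq, real_inner_comm u (z - c)]
      simp only [hG, max_eq_left hp, max_eq_right hq, hcu]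
      field_simp
      ring
    · rw [hF₄ z hp hq, real_inner_comm u (z - c), real_inner_comm v (z - c)]
      simp only [hG, max_eq_left hp, max_eq_left hq, hcu, hcv]
      field_simp
  -- Step 2 : gradient of F
  set gradG : EuclideanSpace ℝ (Fin d) → EuclideanSpace ℝ (Fin d) := fun z =>
      g₀ - (cu * (2 * max ⟪u, z - c⟫ 0)) • u + (cv * (2 * max ⟪v, z - c⟫ 0)) • v with hgradG
  have hGrad : ∀ z, HasGradientAt F (gradG z) z := by
    intro z
    have hGG : HasGradientAt G (gradG z) z := by
      rw [hasGradientAt_iff_hasFDerivAt]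
      have d1 : HasFDerivAt (fun z : EuclideanSpace ℝ (Fin d) => ⟪g₀, z - c⟫)
          (toDual ℝ _ g₀) z := (hasGradientAt_inner_shift g₀ c z).hasFDerivAt
      have d2 : HasFDerivAt (fun z : EuclideanSpace ℝ (Fin d) => max ⟪u, z - c⟫ 0 ^ 2)
          (toDual ℝ _ ((2 * max ⟪u, z - c⟫ 0) • u)) z :=
        (hasGradientAt_maxSq_inner u c z).hasFDerivAt
      have d3 : HasFDerivAt (fun z : EuclideanSpace ℝ (Fin d) => max ⟪v, z - c⟫ 0 ^ 2)
          (toDual ℝ _ ((2 * max ⟪v, z - c⟫ 0) • v)) z :=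
        (hasGradientAt_maxSq_inner v c z).hasFDerivAt
      have dsum := (((hasFDerivAt_const b₀ z).add d1).sub (d2.const_mul cu)).add
        (d3.const_mul cv)
      refine dsum.congr_fderiv ?_
      ext w
      simp only [hgradG, InnerProductSpace.toDual_apply_apply, ContinuousLinearMap.add_apply,
        ContinuousLinearMap.sub_apply, ContinuousLinearMap.smul_apply,
        ContinuousLinearMap.zero_apply, inner_add_left, inner_sub_left, real_inner_smul_left,
        smul_eq_mul]
      ring
    exact hGG.congr_of_eventuallyEq (Filter.Eventually.of_forall hFG)
  have hgrad_eq : ∀ z, gradient F z = gradG z := fun z => (hGrad z).gradient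
  have hdiff : Differentiable ℝ F := fun z => (hGrad z).differentiableAt
  -- Step 3 : Lipschitz gradient
  have hlip : ∃ K : NNReal, LipschitzWith K (fun a => gradient F a) := by
    refine ⟨(|cu| * 2 * ‖u‖ ^ 2 + |cv| * 2 * ‖v‖ ^ 2).toNNReal, ?_⟩
    apply LipschitzWith.of_dist_le_mul
    intro z z'
    simp only [hgrad_eq, dist_eq_norm]
    have key : gradG z - gradG z'
        = -((cu * (2 * max ⟪u, z - c⟫ 0) - cu * (2 * max ⟪u, z' - c⟫ 0)) • u)
          + (cv * (2 * max ⟪v, z - c⟫ 0) - cv * (2 * max ⟪v, z' - c⟫ 0)) • v := by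
      simp only [hgradG, sub_smul]
      abel
    have hmu : |max ⟪u, z - c⟫ 0 - max ⟪u, z' - c⟫ 0| ≤ ‖u‖ * ‖z - z'‖ := by
      refine (abs_max_sub_max_le_abs _ _ _).trans ?_
      have : ⟪u, z - c⟫ - ⟪u, z' - c⟫ = ⟪u, z - z'⟫ := by
        rw [← inner_sub_right]
        congr 1
        abel
      rw [this]
      exact abs_real_inner_le_norm u (z - z')
    have hmv : |max ⟪v, z - c⟫ 0 - max ⟪v, z' - c⟫ 0| ≤ ‖v‖ * ‖z - z'‖ := by
      refine (abs_max_sub_max_le_abs _ _ _).trans ?_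
      have : ⟪v, z - c⟫ - ⟪v, z' - c⟫ = ⟪v, z - z'⟫ := by
        rw [← inner_sub_right]
        congr 1
        abel
      rw [this]
      exact abs_real_inner_le_norm v (z - z')
    have hb : ‖gradG z - gradG z'‖
        ≤ (|cu| * 2 * ‖u‖ ^ 2 + |cv| * 2 * ‖v‖ ^ 2) * ‖z - z'‖ := by
      rw [key]
      refine (norm_add_le _ _).trans ?_
      rw [norm_neg, norm_smul, norm_smul]
      have e1 : ‖cu * (2 * max ⟪u, z - c⟫ 0) - cu * (2 * max ⟪u, z' - c⟫ 0)‖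
          = |cu| * 2 * |max ⟪u, z - c⟫ 0 - max ⟪u, z' - c⟫ 0| := by
        rw [Real.norm_eq_abs, show cu * (2 * max ⟪u, z - c⟫ 0) - cu * (2 * max ⟪u, z' - c⟫ 0)
          = (cu * 2) * (max ⟪u, z - c⟫ 0 - max ⟪u, z' - c⟫ 0) by ring, abs_mul, abs_mul]
        simp [abs_of_nonneg]
      have e2 : ‖cv * (2 * max ⟪v, z - c⟫ 0) - cv * (2 * max ⟪v, z' - c⟫ 0)‖
          = |cv| * 2 * |max ⟪v, z - c⟫ 0 - max ⟪v, z' - c⟫ 0| := by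
        rw [Real.norm_eq_abs, show cv * (2 * max ⟪v, z - c⟫ 0) - cv * (2 * max ⟪v, z' - c⟫ 0)
          = (cv * 2) * (max ⟪v, z - c⟫ 0 - max ⟪v, z' - c⟫ 0) by ring, abs_mul, abs_mul]
        simp [abs_of_nonneg]
      rw [e1, e2]
      have hcu0 : (0:ℝ) ≤ |cu| * 2 * ‖u‖ := by positivity
      have hcv0 : (0:ℝ) ≤ |cv| * 2 * ‖v‖ := by positivity
      nlinarith [mul_le_mul_of_nonneg_left hmu hcu0, mul_le_mul_of_nonneg_left hmv hcv0,
        norm_nonneg u, norm_nonneg v, abs_nonneg cu, abs_nonneg cv]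
    refine hb.trans ?_
    rw [Real.coe_toNNReal _ (by positivity)]
  -- Step 4 : Taylor bound
  have hTaylor : ∀ a z, |F z - (F a + ⟪gradG a, z - a⟫)| ≤ M / 2 * ‖z - a‖ ^ 2 := by
    intro a z
    have hzc : z - c = (a - c) + (z - a) := by abel
    have hpu : ⟪u, z - c⟫ = ⟪u, a - c⟫ + ⟪u, z - a⟫ := by rw [hzc, inner_add_right]
    have hpv : ⟪v, z - c⟫ = ⟪v, a - c⟫ + ⟪v, z - a⟫ := by rw [hzc, inner_add_right]
    have hRu := maxSq_remainder ⟪u, a - c⟫ ⟪u, z - a⟫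
    have hRv := maxSq_remainder ⟪v, a - c⟫ ⟪v, z - a⟫
    have hcs_u : ⟪u, z - a⟫ ^ 2 ≤ ‖u‖ ^ 2 * ‖z - a‖ ^ 2 := by
      have h := abs_real_inner_le_norm u (z - a)
      nlinarith [abs_nonneg ⟪u, z - a⟫, sq_abs ⟪u, z - a⟫, norm_nonneg u, norm_nonneg (z - a)]
    have hcs_v : ⟪v, z - a⟫ ^ 2 ≤ ‖v‖ ^ 2 * ‖z - a‖ ^ 2 := by
      have h := abs_real_inner_le_norm v (z - a)
      nlinarith [abs_nonneg ⟪v, z - a⟫, sq_abs ⟪v, z - a⟫, norm_nonneg v, norm_nonneg (z - a)]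
    have hexp : F z - (F a + ⟪gradG a, z - a⟫)
        = -(cu * (max (⟪u, a - c⟫ + ⟪u, z - a⟫) 0 ^ 2 - max ⟪u, a - c⟫ 0 ^ 2
              - 2 * max ⟪u, a - c⟫ 0 * ⟪u, z - a⟫))
          + cv * (max (⟪v, a - c⟫ + ⟪v, z - a⟫) 0 ^ 2 - max ⟪v, a - c⟫ 0 ^ 2
              - 2 * max ⟪v, a - c⟫ 0 * ⟪v, z - a⟫) := by
      rw [hFG z, hFG a]
      simp only [hG, hgradG, hpu, hpv, inner_add_left, inner_sub_left, real_inner_smul_left]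
      have hg0 : ⟪g₀, z - c⟫ = ⟪g₀, a - c⟫ + ⟪g₀, z - a⟫ := by rw [hzc, inner_add_right]
      rw [hg0]
      ring
    rw [hexp]
    have hau : cu * ‖u‖ ^ 2 = s * (M / 2) := by
      rw [hcu]; field_simp
    have hav : cv * ‖v‖ ^ 2 = s * (M / 2) := by
      rw [hcv]; field_simp
    have hq0 : (0:ℝ) ≤ ‖z - a‖ ^ 2 := sq_nonneg _
    rcases hs with h1 | h1
    · have hcup : 0 ≤ cu := by rw [hcu, h1]; positivity
      have hcvp : 0 ≤ cv := by rw [hcv, h1]; positivity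
      have bu : cu * (max (⟪u, a - c⟫ + ⟪u, z - a⟫) 0 ^ 2 - max ⟪u, a - c⟫ 0 ^ 2
          - 2 * max ⟪u, a - c⟫ 0 * ⟪u, z - a⟫) ≤ M / 2 * ‖z - a‖ ^ 2 := by
        calc _ ≤ cu * (⟪u, z - a⟫ ^ 2) := mul_le_mul_of_nonneg_left hRu.2 hcup
          _ ≤ cu * (‖u‖ ^ 2 * ‖z - a‖ ^ 2) := mul_le_mul_of_nonneg_left hcs_u hcup
          _ = (cu * ‖u‖ ^ 2) * ‖z - a‖ ^ 2 := by ring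
          _ = M / 2 * ‖z - a‖ ^ 2 := by rw [hau, h1]; ring
      have bv : cv * (max (⟪v, a - c⟫ + ⟪v, z - a⟫) 0 ^ 2 - max ⟪v, a - c⟫ 0 ^ 2
          - 2 * max ⟪v, a - c⟫ 0 * ⟪v, z - a⟫) ≤ M / 2 * ‖z - a‖ ^ 2 := by
        calc _ ≤ cv * (⟪v, z - a⟫ ^ 2) := mul_le_mul_of_nonneg_left hRv.2 hcvp
          _ ≤ cv * (‖v‖ ^ 2 * ‖z - a‖ ^ 2) := mul_le_mul_of_nonneg_left hcs_v hcvp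
          _ = (cv * ‖v‖ ^ 2) * ‖z - a‖ ^ 2 := by ring
          _ = M / 2 * ‖z - a‖ ^ 2 := by rw [hav, h1]; ring
      have b0u : 0 ≤ cu * (max (⟪u, a - c⟫ + ⟪u, z - a⟫) 0 ^ 2 - max ⟪u, a - c⟫ 0 ^ 2
          - 2 * max ⟪u, a - c⟫ 0 * ⟪u, z - a⟫) := mul_nonneg hcup hRu.1
      have b0v : 0 ≤ cv * (max (⟪v, a - c⟫ + ⟪v, z - a⟫) 0 ^ 2 - max ⟪v, a - c⟫ 0 ^ 2
          - 2 * max ⟪v, a - c⟫ 0 * ⟪v, z - a⟫) := mul_nonneg hcvp hRv.1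
      rw [abs_le]
      constructor <;> linarith
    · have hcup : cu ≤ 0 := by
        have h0 : (0:ℝ) ≤ M / 2 / ‖u‖ ^ 2 := by positivity
        rw [hcu, h1]
        have he : (-1 : ℝ) * M / 2 / ‖u‖ ^ 2 = -(M / 2 / ‖u‖ ^ 2) := by ring
        rw [he]
        linarith
      have hcvp : cv ≤ 0 := by
        have h0 : (0:ℝ) ≤ M / 2 / ‖v‖ ^ 2 := by positivity
        rw [hcv, h1]
        have he : (-1 : ℝ) * M / 2 / ‖v‖ ^ 2 = -(M / 2 / ‖v‖ ^ 2) := by ring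
        rw [he]
        linarith
      have bu : -(M / 2 * ‖z - a‖ ^ 2) ≤ cu * (max (⟪u, a - c⟫ + ⟪u, z - a⟫) 0 ^ 2
          - max ⟪u, a - c⟫ 0 ^ 2 - 2 * max ⟪u, a - c⟫ 0 * ⟪u, z - a⟫) := by
        have h2 : cu * (⟪u, z - a⟫ ^ 2) ≤ cu * (max (⟪u, a - c⟫ + ⟪u, z - a⟫) 0 ^ 2
            - max ⟪u, a - c⟫ 0 ^ 2 - 2 * max ⟪u, a - c⟫ 0 * ⟪u, z - a⟫) :=
          mul_le_mul_of_nonpos_left hRu.2 hcup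
        have h3 : cu * (‖u‖ ^ 2 * ‖z - a‖ ^ 2) ≤ cu * (⟪u, z - a⟫ ^ 2) :=
          mul_le_mul_of_nonpos_left hcs_u hcup
        have h4 : cu * (‖u‖ ^ 2 * ‖z - a‖ ^ 2) = -(M / 2 * ‖z - a‖ ^ 2) := by
          have : cu * (‖u‖ ^ 2 * ‖z - a‖ ^ 2) = (cu * ‖u‖ ^ 2) * ‖z - a‖ ^ 2 := by ring
          rw [this, hau, h1]; ring
        linarith
      have bv : -(M / 2 * ‖z - a‖ ^ 2) ≤ cv * (max (⟪v, a - c⟫ + ⟪v, z - a⟫) 0 ^ 2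
          - max ⟪v, a - c⟫ 0 ^ 2 - 2 * max ⟪v, a - c⟫ 0 * ⟪v, z - a⟫) := by
        have h2 : cv * (⟪v, z - a⟫ ^ 2) ≤ cv * (max (⟪v, a - c⟫ + ⟪v, z - a⟫) 0 ^ 2
            - max ⟪v, a - c⟫ 0 ^ 2 - 2 * max ⟪v, a - c⟫ 0 * ⟪v, z - a⟫) :=
          mul_le_mul_of_nonpos_left hRv.2 hcvp
        have h3 : cv * (‖v‖ ^ 2 * ‖z - a‖ ^ 2) ≤ cv * (⟪v, z - a⟫ ^ 2) :=
          mul_le_mul_of_nonpos_left hcs_v hcvp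
        have h4 : cv * (‖v‖ ^ 2 * ‖z - a‖ ^ 2) = -(M / 2 * ‖z - a‖ ^ 2) := by
          have : cv * (‖v‖ ^ 2 * ‖z - a‖ ^ 2) = (cv * ‖v‖ ^ 2) * ‖z - a‖ ^ 2 := by ring
          rw [this, hav, h1]; ring
        linarith
      have b0u : cu * (max (⟪u, a - c⟫ + ⟪u, z - a⟫) 0 ^ 2 - max ⟪u, a - c⟫ 0 ^ 2
          - 2 * max ⟪u, a - c⟫ 0 * ⟪u, z - a⟫) ≤ 0 := mul_nonpos_of_nonpos_of_nonneg hcup hRu.1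
      have b0v : cv * (max (⟪v, a - c⟫ + ⟪v, z - a⟫) 0 ^ 2 - max ⟪v, a - c⟫ 0 ^ 2
          - 2 * max ⟪v, a - c⟫ 0 * ⟪v, z - a⟫) ≤ 0 := mul_nonpos_of_nonpos_of_nonneg hcvp hRv.1
      rw [abs_le]
      constructor <;> linarith
  -- Step 5 : ⟪u, v⟫ ≤ 0
  have huv : ⟪u, v⟫ ≤ 0 := by
    set D := (f x).2 - (f y).2 with hD
    have hR : (0:ℝ) < ‖x - y‖ := norm_pos_iff.mpr (sub_ne_zero.mpr hxy)
    set W : EuclideanSpace ℝ (Fin d) → ℝ :=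
      fun a => |eval1 f x a - eval1 f y a| / (‖x - a‖ ^ 2 + ‖y - a‖ ^ 2) with hW
    have hMW : M = 2 * ⨆ a, W a := by rw [hM, gamma1]
    have hbdd : BddAbove (Set.range W) := by
      by_contra hb
      rw [Real.iSup_of_not_bddAbove hb, mul_zero] at hMW
      exact absurd hMW (ne_of_gt hMpos)
    have hle : ∀ a, 2 * W a ≤ M := by
      intro a
      have h := le_ciSup hbdd a
      rw [hMW]
      linarith only [h]
    set m := midpoint ℝ x y with hm
    set σ : ℝ := if 0 ≤ eval1 f x m - eval1 f y m then 1 else -1 with hσ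
    have hσsq : σ ^ 2 = 1 := by rw [hσ]; split_ifs <;> norm_num
    have hσabs : |σ| = 1 := by rw [hσ]; split_ifs <;> norm_num
    have hσ2 : σ * (eval1 f x m - eval1 f y m) = |eval1 f x m - eval1 f y m| := by
      rw [hσ]
      split_ifs with h
      · rw [abs_of_nonneg h]; ring
      · rw [abs_of_neg (lt_of_not_ge h)]; ring
    set a₀ := m + (σ / (2 * M)) • D with ha₀
    have hax : a₀ - x = (m - x) + (σ / (2 * M)) • D := by rw [ha₀]; abel
    have hay : a₀ - y = (m - y) + (σ / (2 * M)) • D := by rw [ha₀]; abel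
    have hL : eval1 f x a₀ - eval1 f y a₀
        = (eval1 f x m - eval1 f y m) + σ / (2 * M) * ‖D‖ ^ 2 := by
      rw [eval1, eval1, eval1, eval1, hax, hay, inner_add_right, inner_add_right,
        real_inner_smul_right, real_inner_smul_right]
      have hDD : ⟪(f x).2, D⟫ - ⟪(f y).2, D⟫ = ‖D‖ ^ 2 := by
        rw [← inner_sub_left, ← hD, real_inner_self_eq_norm_sq]
      rw [← hDD]
      ring
    have hx0 : x - a₀ = (1/2 : ℝ) • (x - y) - (σ / (2 * M)) • D := by
      rw [ha₀, hm, midpoint_eq_smul_add, invOf_eq_inv]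
      module
    have hy0 : y - a₀ = -((1/2 : ℝ) • (x - y)) - (σ / (2 * M)) • D := by
      rw [ha₀, hm, midpoint_eq_smul_add, invOf_eq_inv]
      module
    have hnA : ‖(1/2 : ℝ) • (x - y)‖ ^ 2 = 1/4 * ‖x - y‖ ^ 2 := by
      rw [norm_smul, Real.norm_eq_abs]
      rw [show |(1/2 : ℝ)| = 1/2 by norm_num]
      ring
    have hnB : ‖(σ / (2 * M)) • D‖ ^ 2 = ‖D‖ ^ 2 / (4 * M ^ 2) := by
      rw [norm_smul, Real.norm_eq_abs, mul_pow, sq_abs, div_pow, hσsq]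
      ring
    have hden : ‖x - a₀‖ ^ 2 + ‖y - a₀‖ ^ 2 = ‖x - y‖ ^ 2 / 2 + ‖D‖ ^ 2 / (2 * M ^ 2) := by
      have h1 : ‖x - a₀‖ ^ 2 = ‖(1/2 : ℝ) • (x - y)‖ ^ 2
          - 2 * ⟪(1/2 : ℝ) • (x - y), (σ / (2 * M)) • D⟫ + ‖(σ / (2 * M)) • D‖ ^ 2 := by
        rw [hx0, norm_sub_sq_real]
      have h2 : ‖y - a₀‖ ^ 2 = ‖(1/2 : ℝ) • (x - y)‖ ^ 2
          + 2 * ⟪(1/2 : ℝ) • (x - y), (σ / (2 * M)) • D⟫ + ‖(σ / (2 * M)) • D‖ ^ 2 := by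
        have e : y - a₀ = -((1/2 : ℝ) • (x - y) + (σ / (2 * M)) • D) := by
          rw [hy0]; abel
        rw [e, norm_neg, norm_add_sq_real]
      rw [h1, h2, hnA, hnB]
      ring
    have hdenpos : (0:ℝ) < ‖x - a₀‖ ^ 2 + ‖y - a₀‖ ^ 2 := by
      rw [hden]
      positivity
    have e1 : σ * (eval1 f x a₀ - eval1 f y a₀) ≤ |eval1 f x a₀ - eval1 f y a₀| := by
      calc σ * (eval1 f x a₀ - eval1 f y a₀) ≤ |σ * (eval1 f x a₀ - eval1 f y a₀)| :=
            le_abs_self _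
        _ = |eval1 f x a₀ - eval1 f y a₀| := by rw [abs_mul, hσabs, one_mul]
    have e2 : σ * (eval1 f x a₀ - eval1 f y a₀)
        = |eval1 f x m - eval1 f y m| + σ ^ 2 / (2 * M) * ‖D‖ ^ 2 := by
      rw [hL, mul_add, hσ2]
      ring
    have e3 : ‖D‖ ^ 2 / (2 * M) ≤ |eval1 f x a₀ - eval1 f y a₀| := by
      rw [e2, hσsq] at e1
      have heq : 1 / (2 * M) * ‖D‖ ^ 2 = ‖D‖ ^ 2 / (2 * M) := by ring
      linarith only [heq ▸ e1, abs_nonneg (eval1 f x m - eval1 f y m)]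
    have e4 : |eval1 f x a₀ - eval1 f y a₀|
        ≤ M / 2 * (‖x - y‖ ^ 2 / 2 + ‖D‖ ^ 2 / (2 * M ^ 2)) := by
      have h := hle a₀
      simp only [hW] at h
      rw [hden] at h
      have h' : |eval1 f x a₀ - eval1 f y a₀|
          / (‖x - y‖ ^ 2 / 2 + ‖D‖ ^ 2 / (2 * M ^ 2)) ≤ M / 2 := by linarith only [h]
      rw [div_le_iff₀ (by positivity)] at h'
      linarith only [h']
    have e5 : ‖D‖ ^ 2 / (2 * M) ≤ M / 2 * (‖x - y‖ ^ 2 / 2 + ‖D‖ ^ 2 / (2 * M ^ 2)) :=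
      le_trans e3 e4
    have hfin : ‖D‖ ^ 2 ≤ M ^ 2 * ‖x - y‖ ^ 2 := by
      have id1 : 2 * M * (‖D‖ ^ 2 / (2 * M)) = ‖D‖ ^ 2 := by field_simp
      have id2 : 2 * M * (M / 2 * (‖x - y‖ ^ 2 / 2 + ‖D‖ ^ 2 / (2 * M ^ 2)))
          = M ^ 2 * ‖x - y‖ ^ 2 / 2 + ‖D‖ ^ 2 / 2 := by
        field_simp
      have e6 := mul_le_mul_of_nonneg_left e5 (le_of_lt (by positivity : (0:ℝ) < 2 * M))
      rw [id1, id2] at e6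
      linarith only [e6]
    -- polarization
    have hpolar : 4 * ⟪u, v⟫ = ‖u + v‖ * ‖u + v‖ - ‖u - v‖ * ‖u - v‖ := by
      have h1 := real_inner_eq_norm_add_mul_self_sub_norm_mul_self_sub_norm_mul_self_div_two u v
      have h2 := real_inner_eq_norm_mul_self_add_norm_mul_self_sub_norm_sub_mul_self_div_two u v
      linarith only [h1, h2]
    have hsub : u - v = x - y := by rw [hu_def, hv_def]; abel
    have hadd : u + v = -((s / M) • D) := by
      rw [hu_def, hv_def, hc, hm, midpoint_eq_smul_add, invOf_eq_inv]
      have hscal : (s / (2 * M)) + (s / (2 * M)) = s / M := by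
        field_simp
        ring
      module
    have hnadd : ‖u + v‖ ^ 2 = ‖D‖ ^ 2 / M ^ 2 := by
      rw [hadd, norm_neg, norm_smul, Real.norm_eq_abs, mul_pow, sq_abs, div_pow, hs2]
      ring
    have h4 : 4 * ⟪u, v⟫ = ‖D‖ ^ 2 / M ^ 2 - ‖x - y‖ ^ 2 := by
      rw [hpolar, ← sq, ← sq, hnadd, hsub]
    have hd2 : ‖D‖ ^ 2 / M ^ 2 ≤ ‖x - y‖ ^ 2 := by
      rw [div_le_iff₀ (by positivity)]
      linarith only [hfin]
    linarith only [h4, hd2]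
  have exu : ⟪u, x - c⟫ = ‖u‖ ^ 2 := by rw [← hu_def, real_inner_self_eq_norm_sq]
  have exv : ⟪v, x - c⟫ = ⟪v, u⟫ := by rw [← hu_def]
  have evu : ⟪u, y - c⟫ = ⟪u, v⟫ := by rw [← hv_def]
  have evv : ⟪v, y - c⟫ = ‖v‖ ^ 2 := by rw [← hv_def, real_inner_self_eq_norm_sq]
  have hvu0 : ⟪v, u⟫ ≤ 0 := by rw [real_inner_comm]; exact huv
  have hmaxu : max ⟪u, x - c⟫ 0 = ‖u‖ ^ 2 := by rw [exu]; exact max_eq_left (sq_nonneg _)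
  have hmaxvx : max ⟪v, x - c⟫ 0 = 0 := by rw [exv]; exact max_eq_right hvu0
  have hmaxuy : max ⟪u, y - c⟫ 0 = 0 := by rw [evu]; exact max_eq_right huv
  have hmaxv : max ⟪v, y - c⟫ 0 = ‖v‖ ^ 2 := by rw [evv]; exact max_eq_left (sq_nonneg _)
  have hau : cu * ‖u‖ ^ 2 = s * (M / 2) := by rw [hcu]; field_simp
  have hav : cv * ‖v‖ ^ 2 = s * (M / 2) := by rw [hcv]; field_simp
  have hGx : G x = (f x).1 := by
    simp only [hG, hmaxu, hmaxvx]
    have hg : ⟪g₀, x - c⟫ = ⟪(f x).2, u⟫ + s * M * ‖u‖ ^ 2 := by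
      rw [hg₀, ← hu_def, inner_add_left, real_inner_smul_left, real_inner_self_eq_norm_sq]
    have hcx' : c - x = -u := by rw [hu_def]; abel
    have hb : b₀ = (f x).1 - ⟪(f x).2, u⟫ - s * M / 2 * ‖u‖ ^ 2 := by
      rw [hb₀, eval1, hcx', inner_neg_right, ← hu_def]
      ring
    have hq : cu * (‖u‖ ^ 2) ^ 2 = s * (M / 2) * ‖u‖ ^ 2 := by
      rw [show (‖u‖ ^ 2) ^ 2 = ‖u‖ ^ 2 * ‖u‖ ^ 2 by ring, ← mul_assoc, hau]
    rw [hg, hb, hq]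
    ring
  have hgGx : gradG x = (f x).2 := by
    simp only [hgradG, hmaxu, hmaxvx]
    have hsc : cu * (2 * ‖u‖ ^ 2) = s * M := by
      rw [show cu * (2 * ‖u‖ ^ 2) = 2 * (cu * ‖u‖ ^ 2) by ring, hau]
      ring
    rw [hsc, hg₀, ← hu_def]
    simp only [mul_zero, zero_smul, add_zero]
    abel
  have hGy : G y = (f y).1 := by
    simp only [hG, hmaxuy, hmaxv]
    have hg : ⟪g₀, y - c⟫ = ⟪(f y).2, v⟫ - s * M * ‖v‖ ^ 2 := by
      rw [hceq2, ← hv_def, inner_sub_left, real_inner_smul_left, real_inner_self_eq_norm_sq]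
    have hcy' : c - y = -v := by rw [hv_def]; abel
    have hb : b₀ = (f y).1 - ⟪(f y).2, v⟫ + s * M / 2 * ‖v‖ ^ 2 := by
      rw [hceq1, eval1, hcy', inner_neg_right]
      ring
    have hq : cv * (‖v‖ ^ 2) ^ 2 = s * (M / 2) * ‖v‖ ^ 2 := by
      rw [show (‖v‖ ^ 2) ^ 2 = ‖v‖ ^ 2 * ‖v‖ ^ 2 by ring, ← mul_assoc, hav]
    rw [hg, hb, hq]
    ring
  have hgGy : gradG y = (f y).2 := by
    simp only [hgradG, hmaxuy, hmaxv]
    have hsc : cv * (2 * ‖v‖ ^ 2) = s * M := by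
      rw [show cv * (2 * ‖v‖ ^ 2) = 2 * (cv * ‖v‖ ^ 2) by ring, hav]
      ring
    rw [hsc, hceq2]
    simp only [mul_zero, zero_smul, sub_zero]
    abel
  have hUx : U x = f x := by
    rw [hU x, hgrad_eq x, hFG x, hGx, hgGx]
  have hUy : U y = f y := by
    rw [hU y, hgrad_eq y, hFG y, hGy, hgGy]
  -- Step 7 : the global Γ¹ equals M
  have hgamU : ∀ a b, a ≠ b → gamma1 U a b ≤ M := by
    intro a b hab
    rw [gamma1]
    have hb : ∀ z, |eval1 U a z - eval1 U b z| / (‖a - z‖ ^ 2 + ‖b - z‖ ^ 2) ≤ M / 2 := by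
      intro z
      have hden : 0 < ‖a - z‖ ^ 2 + ‖b - z‖ ^ 2 := by
        rcases eq_or_ne a z with h | h
        · have h2 : b ≠ z := fun hbz => hab (by rw [h, hbz])
          have hp2 : (0:ℝ) < ‖b - z‖ := norm_pos_iff.mpr (sub_ne_zero.mpr h2)
          positivity
        · have hp2 : (0:ℝ) < ‖a - z‖ := norm_pos_iff.mpr (sub_ne_zero.mpr h)
          positivity
      have heva : eval1 U a z = F a + ⟪gradG a, z - a⟫ := by
        rw [eval1, hU a, hgrad_eq a]
      have hevb : eval1 U b z = F b + ⟪gradG b, z - b⟫ := by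
        rw [eval1, hU b, hgrad_eq b]
      have h1 := hTaylor a z
      have h2 := hTaylor b z
      have hnum : |eval1 U a z - eval1 U b z|
          ≤ M / 2 * (‖a - z‖ ^ 2 + ‖b - z‖ ^ 2) := by
        rw [heva, hevb]
        have e1 : ‖a - z‖ = ‖z - a‖ := norm_sub_rev a z
        have e2 : ‖b - z‖ = ‖z - b‖ := norm_sub_rev b z
        rw [e1, e2]
        calc |F a + ⟪gradG a, z - a⟫ - (F b + ⟪gradG b, z - b⟫)|
            ≤ |F z - (F a + ⟪gradG a, z - a⟫)| + |F z - (F b + ⟪gradG b, z - b⟫)| := by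
              rw [show F a + ⟪gradG a, z - a⟫ - (F b + ⟪gradG b, z - b⟫)
                = (F z - (F b + ⟪gradG b, z - b⟫)) - (F z - (F a + ⟪gradG a, z - a⟫)) by ring]
              exact (abs_sub _ _).trans (by rw [add_comm])
          _ ≤ M / 2 * ‖z - a‖ ^ 2 + M / 2 * ‖z - b‖ ^ 2 := add_le_add h1 h2
          _ = M / 2 * (‖z - a‖ ^ 2 + ‖z - b‖ ^ 2) := by ring
      rw [div_le_iff₀ hden]
      linarith
    have hsup : (⨆ z, |eval1 U a z - eval1 U b z| / (‖a - z‖ ^ 2 + ‖b - z‖ ^ 2)) ≤ M / 2 :=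
      ciSup_le hb
    linarith
  have hgxy : gamma1 U x y = M := by
    have e : ∀ p a, eval1 U p a = eval1 f p a ∨ True := fun _ _ => Or.inr trivial
    have e1 : ∀ a, eval1 U x a = eval1 f x a := fun a => by rw [eval1, eval1, hUx]
    have e2 : ∀ a, eval1 U y a = eval1 f y a := fun a => by rw [eval1, eval1, hUy]
    rw [gamma1, hM, gamma1]
    congr 1
    apply congrArg
    funext a
    rw [e1 a, e2 a]
  refine ⟨hdiff, hlip, hUx, hUy, le_antisymm ?_ ?_⟩
  · rw [gamma1On]
    exact iSup_le fun a => iSup_le fun _ => iSup_le fun b => iSup_le fun _ =>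
      iSup_le fun hab => ENNReal.ofReal_le_ofReal (hgamU a b hab)
  · have hle : ENNReal.ofReal (gamma1 U x y) ≤ gamma1On U Set.univ := by
      rw [gamma1On]
      exact le_iSup_of_le x (le_iSup_of_le (mem_univ x) (le_iSup_of_le y
        (le_iSup_of_le (mem_univ y) (le_iSup_of_le hxy le_rfl))))
    rwa [hgxy] at hle
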